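/- For every group Γ, every prime p, and every k ≥ 1, cd_{ℤ/p^k}(Γ) = cd_{ℤ/p}(Γ). -/

import Mathlib

open Finset

universe u

/-- The integers as the trivial module over the group ring `ℤΓ`. -/
noncomputable abbrev TrivialZ (Γ : Type) [Group Γ] : Type :=
  (Representation.trivial ℤ (G := Γ) (V := ℤ)).asModule

/-- A group `Γ` is of finite type (type `FP_∞`) if the trivial `ℤΓ`-module `ℤ` admits a
resolution by finitely generated free `ℤΓ`-modules. -/
def HasFiniteType (Γ : Type) [Group Γ] : Prop :=
  ∃ (C : ℕ → Type) (_ : ∀ n, AddCommGroup (C n))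
    (_ : ∀ n, Module (MonoidAlgebra ℤ Γ) (C n)),
    (∀ n, Module.Free (MonoidAlgebra ℤ Γ) (C n)) ∧
    (∀ n, Module.Finite (MonoidAlgebra ℤ Γ) (C n)) ∧
    ∃ (d : ∀ n, C (n + 1) →ₗ[MonoidAlgebra ℤ Γ] C n)
      (ε : C 0 →ₗ[MonoidAlgebra ℤ Γ] TrivialZ Γ),
      Function.Surjective ε ∧
      LinearMap.range (d 0) = LinearMap.ker ε ∧
      ∀ n, LinearMap.range (d (n + 1)) = LinearMap.ker (d n)

/-- A group `Γ` is geometrically finite (type `FL`) if the trivial `ℤΓ`-module `ℤ` admits a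
finite-length resolution by finitely generated free `ℤΓ`-modules. -/
def IsGeomFinite (Γ : Type) [Group Γ] : Prop :=
  ∃ (N : ℕ) (C : ℕ → Type) (_ : ∀ n, AddCommGroup (C n))
    (_ : ∀ n, Module (MonoidAlgebra ℤ Γ) (C n)),
    (∀ n, Module.Free (MonoidAlgebra ℤ Γ) (C n)) ∧
    (∀ n, Module.Finite (MonoidAlgebra ℤ Γ) (C n)) ∧
    (∀ n, N < n → Subsingleton (C n)) ∧
    ∃ (d : ∀ n, C (n + 1) →ₗ[MonoidAlgebra ℤ Γ] C n)
      (ε : C 0 →ₗ[MonoidAlgebra ℤ Γ] TrivialZ Γ),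
      Function.Surjective ε ∧
      LinearMap.range (d 0) = LinearMap.ker ε ∧
      ∀ n, LinearMap.range (d (n + 1)) = LinearMap.ker (d n)

/-- The cohomological dimension of `Γ` over the ring `R`: the supremum (in `ℕ∞`) of
the degrees `n` with `Hⁿ(Γ, M) ≠ 0` for some `RΓ`-module `M`. -/
noncomputable def cohDim (R : Type) [CommRing R] (Γ : Type) [Group Γ] : ℕ∞ :=
  sSup {e : ℕ∞ | ∃ (n : ℕ) (M : Rep R Γ), e = n ∧ Nontrivial (groupCohomology M n)}

/-!
Every `ℤ/pᵏ`-module `M` is an iterated extension of `ℤ/p`-modules: `0 → pM → M → M/pM → 0`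
with `pᵏ⁻¹(pM) = 0` and `p(M/pM) = 0`, so exactness of `Hⁿ(Γ, pM) → Hⁿ(Γ, M) → Hⁿ(Γ, M/pM)`
and induction on `k` show that `Hⁿ(Γ, -)` vanishes on all `ℤ/pᵏ`-modules once it vanishes on all
`ℤ/p`-modules. Conversely every `ℤ/p`-module is a `ℤ/pᵏ`-module. Both comparisons rest on the
fact that `Hⁿ(Γ, M)` is computed by inhomogeneous cochains, whose differentials only involve the
additive group of `M` and the action of `Γ`, not the coefficient ring.
-/

open CategoryTheory Limits

namespace CategoryTheory

variable {R : Type*} [CommRing R] {C : Type*} [Category C] [Abelian C] [Linear R C]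

lemma smul_id_image_eq_zero {X Y : C} {f : X ⟶ Y} {r : R} (h : r • f = 0) :
    r • 𝟙 (Abelian.image f) = 0 := by
  rw [← cancel_epi (Abelian.factorThruImage f), ← cancel_mono (Abelian.image.ι f)]
  simp [Linear.comp_smul, Linear.smul_comp, h]

lemma smul_id_cokernel_smul_id (r : R) (X : C) : r • 𝟙 (cokernel (r • 𝟙 X)) = 0 := by
  rw [← cancel_epi (cokernel.π (r • 𝟙 X)), comp_zero, Linear.comp_smul, Category.comp_id,
    ← Category.id_comp (cokernel.π _), ← Linear.smul_comp, cokernel.condition]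

theorem isZero_obj_of_smul_pow_id_eq_zero {D : Type*} [Category D] [Preadditive D] (F : C ⥤ D)
    [F.PreservesZeroMorphisms] (hF : ∀ S : ShortComplex C, S.ShortExact → (S.map F).Exact)
    (r : R) (hr : ∀ X : C, r • 𝟙 X = 0 → IsZero (F.obj X)) :
    ∀ (i : ℕ) {X : C}, r ^ i • 𝟙 X = 0 → IsZero (F.obj X)
  | 0, X, hX => F.map_isZero ((IsZero.iff_id_eq_zero X).2 (by simpa using hX))
  | i + 1, X, hX => by
    -- `0 → im (r • 𝟙 X) → X → coker (r • 𝟙 X) → 0`, as `Abelian.image f := kernel (cokernel.π f)`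
    have hS := hF (.mk _ _ (kernel.condition (cokernel.π (r • 𝟙 X))))
      { exact := ShortComplex.exact_kernel _ }
    have hImage : r ^ i • 𝟙 (Abelian.image (r • 𝟙 X)) = 0 :=
      smul_id_image_eq_zero (by rw [smul_smul, ← pow_succ, hX])
    exact hS.isZero_X₂ ((isZero_obj_of_smul_pow_id_eq_zero F hF r hr i hImage).eq_of_src _ _)
      ((hr _ (smul_id_cokernel_smul_id r X)).eq_of_tgt _ _)

end CategoryTheory

lemma CategoryTheory.ShortComplex.moduleCat_exact_iff_of_addEquiv {R S : Type*} [Ring R] [Ring S]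
    {S₁ : ShortComplex (ModuleCat R)} {S₂ : ShortComplex (ModuleCat S)} (e₁ : S₁.X₁ ≃+ S₂.X₁)
    (e₂ : S₁.X₂ ≃+ S₂.X₂) (e₃ : S₁.X₃ ≃+ S₂.X₃) (hf : ∀ x, e₂ (S₁.f x) = S₂.f (e₁ x))
    (hg : ∀ x, e₃ (S₁.g x) = S₂.g (e₂ x)) : S₁.Exact ↔ S₂.Exact := by
  simp only [ShortComplex.moduleCat_exact_iff]
  constructor
  · intro h y hy
    obtain ⟨x, hx⟩ := h (e₂.symm y) (e₃.injective (by simp [hg, hy]))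
    exact ⟨e₁ x, by rw [← hf, hx, AddEquiv.apply_symm_apply]⟩
  · intro h x hx
    obtain ⟨y, hy⟩ := h (e₂ x) (by rw [← hg, hx, map_zero])
    exact ⟨e₁.symm y, e₂.injective (by rw [hf, AddEquiv.apply_symm_apply, hy])⟩

lemma HomologicalComplex.exactAt_iff_of_addEquiv {R S : Type*} [Ring R] [Ring S] {ι : Type*}
    {c : ComplexShape ι} {K : HomologicalComplex (ModuleCat R) c}
    {L : HomologicalComplex (ModuleCat S) c} (e : ∀ i, K.X i ≃+ L.X i)
    (he : ∀ i j x, e j (K.d i j x) = L.d i j (e i x)) (i : ι) :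
    K.ExactAt i ↔ L.ExactAt i := by
  simp only [HomologicalComplex.exactAt_iff]
  exact ShortComplex.moduleCat_exact_iff_of_addEquiv (e _) (e _) (e _) (he _ _) (he _ _)

lemma neg_one_pow_smul_eq_zsmul {R M : Type*} [Ring R] [AddCommGroup M] [Module R M] (m : ℕ)
    (x : M) : (-1 : R) ^ m • x = (-1 : ℤ) ^ m • x := by
  rw [← Int.cast_smul_eq_zsmul R]
  push_cast
  rfl

namespace groupCohomology

variable {R S : Type} [CommRing R] [CommRing S] {Γ : Type} [Group Γ]

lemma inhomogeneousCochains_d_comp_addEquiv {A : Rep R Γ} {B : Rep S Γ} (e : A ≃+ B)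
    (he : ∀ g x, e (A.ρ g x) = B.ρ g (e x)) (i j : ℕ) (f : (inhomogeneousCochains A).X i) :
    e ∘ (inhomogeneousCochains A).d i j f = (inhomogeneousCochains B).d i j (e ∘ f) := by
  by_cases hij : i + 1 = j
  · subst hij
    funext g
    simp [inhomogeneousCochains.d_hom_apply, he, neg_one_pow_smul_eq_zsmul]
  · have hij' : ¬(ComplexShape.up ℕ).Rel i j := hij
    rw [(inhomogeneousCochains A).shape i j hij', (inhomogeneousCochains B).shape i j hij']
    exact funext fun _ => map_zero e

theorem isZero_groupCohomology_iff_of_addEquiv {A : Rep R Γ} {B : Rep S Γ} (e : A ≃+ B)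
    (he : ∀ g x, e (A.ρ g x) = B.ρ g (e x)) (n : ℕ) :
    IsZero (groupCohomology A n) ↔ IsZero (groupCohomology B n) := by
  simp only [groupCohomology, ← HomologicalComplex.exactAt_iff_isZero_homology]
  exact HomologicalComplex.exactAt_iff_of_addEquiv (fun _ => AddEquiv.piCongrRight fun _ => e)
    (inhomogeneousCochains_d_comp_addEquiv e he) n

end groupCohomology

namespace Rep

variable {R : Type} [CommRing R] {Γ : Type} [Group Γ]

abbrev toZMod (A : Rep R Γ) (n : ℕ) [Module (ZMod n) A] : Rep (ZMod n) Γ :=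
  Rep.of (X := A)
    { toFun := fun g => (A.ρ g).toAddMonoidHom.toZModLinearMap n
      map_one' := by ext; simp
      map_mul' := fun _ _ => by ext; simp }

lemma isZero_groupCohomology_toZMod_iff (A : Rep R Γ) (n : ℕ) [Module (ZMod n) A] (m : ℕ) :
    IsZero (groupCohomology (A.toZMod n) m) ↔ IsZero (groupCohomology A m) :=
  groupCohomology.isZero_groupCohomology_iff_of_addEquiv (A := A.toZMod n) (B := A) (.refl _)
    (fun _ _ => rfl) m

lemma nsmul_eq_zero_of_natCast_smul_id_eq_zero (X : Rep R Γ) {m : ℕ}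
    (h : (m : R) • 𝟙 X = 0) (x : X) : m • x = 0 := by
  rw [← Nat.cast_smul_eq_nsmul R]
  exact congr($h x)

end Rep

lemma cohDim_eq_of_forall_isZero_iff {R S : Type} [CommRing R] [CommRing S] {Γ : Type} [Group Γ]
    (h : ∀ n, (∀ M : Rep R Γ, IsZero (groupCohomology M n)) ↔
      ∀ N : Rep S Γ, IsZero (groupCohomology N n)) :
    cohDim R Γ = cohDim S Γ := by
  have key : ∀ n, (∃ M : Rep R Γ, Nontrivial (groupCohomology M n)) ↔
      ∃ N : Rep S Γ, Nontrivial (groupCohomology N n) := by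
    simpa only [ModuleCat.isZero_iff_subsingleton, ← not_nontrivial_iff_subsingleton,
      ← not_exists, not_iff_not] using h
  simp only [cohDim, exists_and_left, key]

theorem stmt18_general (Γ : Type) [Group Γ] (p : ℕ) (k : ℕ) (hk : 1 ≤ k) :
    cohDim (ZMod (p ^ k)) Γ = cohDim (ZMod p) Γ := by
  refine cohDim_eq_of_forall_isZero_iff fun n => ⟨fun h N => ?_, fun h M => ?_⟩
  · let _ : Module (ZMod (p ^ k)) N := AddCommGroup.zmodModule fun x => by
      rw [← Nat.cast_smul_eq_nsmul (ZMod p), Nat.cast_pow, ZMod.natCast_self, zero_pow (by omega),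
        zero_smul]
    exact (N.isZero_groupCohomology_toZMod_iff (p ^ k) n).1 (h _)
  · have h_p_torsion (X : Rep (ZMod (p ^ k)) Γ) (hX : (p : ZMod (p ^ k)) • 𝟙 X = 0) :
        IsZero (groupCohomology X n) := by
      let _ : Module (ZMod p) X :=
        AddCommGroup.zmodModule (X.nsmul_eq_zero_of_natCast_smul_id_eq_zero hX)
      exact (X.isZero_groupCohomology_toZMod_iff p n).1 (h _)
    refine isZero_obj_of_smul_pow_id_eq_zero (groupCohomology.functor _ Γ n)
      (fun S hS => groupCohomology.mapShortComplex₂_exact hS n) _ h_p_torsion k ?_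
    rw [← Nat.cast_pow, ZMod.natCast_self, zero_smul]

/-- For every group `Γ`, every prime `p` and every `k ≥ 1`,
`cd_{ℤ/p^k}(Γ) = cd_{ℤ/p}(Γ)`. -/
theorem stmt18 (Γ : Type) [Group Γ] (p : ℕ) (hp : p.Prime) (k : ℕ) (hk : 1 ≤ k) :
    cohDim (ZMod (p ^ k)) Γ = cohDim (ZMod p) Γ :=
  stmt18_general Γ p k hk
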